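/- Define semitables over variables x,y,z inductively: z is a semitable, and if a(x,y,z) is a semitable then (Sᵖ(x) ⋅ Sᵠ(y)) ⋅ a(x,y,z) is a semitable, where ⋅ is a binary function symbol. Let Tab(w) be the formula 0 ≐ S(0) ∧ k ≐ (0 ⋅ 0) ⋅ k → k ≐ w. Then a closed term b satisfies ⊨ Tab(b) if and only if b = a(0,0,k) for some semitable a(x,y,z). -/

import Mathlib

open FirstOrder Language

def L : FirstOrder.Language := ⟨fun _ => ℕ, fun _ => ℕ⟩

abbrev CTerm : Type := L.Term Empty

def kC {α : Type} (n : ℕ) : L.Term α := Term.func (n : L.Functions 0) ![]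
def Sf {α : Type} (t : L.Term α) : L.Term α := Term.func ((0 : ℕ) : L.Functions 1) ![t]
def Snum {α : Type} : ℕ → L.Term α → L.Term α
  | 0, t => t
  | m+1, t => Sf (Snum m t)
def pairT {α : Type} (t u : L.Term α) : L.Term α := Term.func ((0 : ℕ) : L.Functions 2) ![t, u]

def Valid {L' : FirstOrder.Language} (φ : L'.Sentence) : Prop :=
  ∀ (M : Type) [L'.Structure M] [Nonempty M], M ⊨ φ

def J (j k : ℕ) : ℕ := (j + k) * (j + k + 1) + k + 1

/-- Semitables over the variables x, y, z (encoded as Fin 3): z is a semitable,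
and if a is a semitable then (Sᵖ(x) ⋅ Sᵠ(y)) ⋅ a is a semitable. -/
inductive IsSemitable : L.Term (Fin 3) → Prop
  | base : IsSemitable (Term.var 2)
  | step (p q : ℕ) (a : L.Term (Fin 3)) : IsSemitable a →
      IsSemitable (pairT (pairT (Snum p (Term.var 0)) (Snum q (Term.var 1))) a)

/-- Tab(w) is the formula 0 ≐ S(0) ∧ k ≐ (0 ⋅ 0) ⋅ k → k ≐ w, with 0 and k the
constants of indices 0 and 1. -/
def TabF (w : CTerm) : L.Sentence :=
  ((Term.equal (kC 0) (Sf (kC 0))) ⊓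
    (Term.equal (kC 1) (pairT (pairT (kC 0) (kC 0)) (kC 1)))).imp (Term.equal (kC 1) w)

/-!
If `0 = S(0)` and `k = (0 ⋅ 0) ⋅ k`, then every numeral `Sⁿ(0)` equals `0`, so every row head
`Sᵖ(0) ⋅ Sᵠ(0)` equals `0 ⋅ 0` and, by induction on the semitable, every `a(0, 0, k)` equals `k`.
Conversely, a four-element structure satisfies both equations while giving the value of `k` only
to the terms `a(0, 0, k)`: inverting its operations classifies the closed terms taking the values
of `0`, of `0 ⋅ 0` and of `k`.
-/

section Terms

variable {α β : Type}

@[simp]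
lemma subst_Sf (t : L.Term α) (σ : α → L.Term β) : (Sf t).subst σ = Sf (t.subst σ) := by
  simp only [Sf, Term.subst]
  congr 1
  funext i
  fin_cases i
  rfl

@[simp]
lemma subst_pairT (t u : L.Term α) (σ : α → L.Term β) :
    (pairT t u).subst σ = pairT (t.subst σ) (u.subst σ) := by
  simp only [pairT, Term.subst]
  congr 1
  funext i
  fin_cases i <;> rfl

@[simp]
lemma subst_Snum (m : ℕ) (t : L.Term α) (σ : α → L.Term β) :
    (Snum m t).subst σ = Snum m (t.subst σ) := by
  induction m with
  | zero => rfl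
  | succ m ih => simp only [Snum, subst_Sf, ih]

@[simp]
lemma subst_kC (n : ℕ) (σ : α → L.Term β) : (kC n : L.Term α).subst σ = kC n := by
  simp only [kC, Term.subst]
  congr 1
  exact funext fun i => i.elim0

/-- `f` is the index of a symbol of arity `l`: the constants, `S` (index 0, arity 1) and
`⋅` (index 0, arity 2). -/
def IsTabSymbol (l f : ℕ) : Prop := l = 0 ∨ f = 0 ∧ (l = 1 ∨ l = 2)

lemma Term.induction_on_tabSymbols {P : L.Term α → Prop} (b : L.Term α)
    (var : ∀ x, P (Term.var x))
    (const : ∀ n, P (kC n)) (succ : ∀ t, P t → P (Sf t))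
    (pair : ∀ t u, P t → P u → P (pairT t u))
    (other : ∀ {l} (f : ℕ) (ts : Fin l → L.Term α), ¬ IsTabSymbol l f → P (Term.func f ts)) :
    P b := by
  induction b with
  | var x => exact var x
  | @func l f ts ih =>
    by_cases hf : IsTabSymbol l f
    · rcases hf with rfl | ⟨rfl, rfl | rfl⟩
      · convert const f
        simp only [kC]
        congr 1
        exact funext fun i => i.elim0
      · convert succ (ts 0) (ih 0)
        simp only [Sf]
        congr 1
        funext i
        fin_cases i
        rfl
      · convert pair (ts 0) (ts 1) (ih 0) (ih 1)
        simp only [pairT]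
        congr 1
        funext i
        fin_cases i <;> rfl
    · exact other f ts hf

end Terms

section Semantics

variable {M : Type} [L.Structure M] {α : Type} (v : α → M)

@[simp]
lemma realize_Sf (t : L.Term α) :
    (Sf t).realize v = Structure.funMap (L := L) ((0 : ℕ) : L.Functions 1) ![t.realize v] :=
  Term.realize_functions_apply₁

@[simp]
lemma realize_pairT (t u : L.Term α) :
    (pairT t u).realize v =
      Structure.funMap (L := L) ((0 : ℕ) : L.Functions 2) ![t.realize v, u.realize v] :=
  Term.realize_functions_apply₂

variable {v}

lemma realize_Snum_zero (h : (kC 0 : L.Term α).realize v = (Sf (kC 0)).realize v) (n : ℕ) :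
    (Snum n (kC 0) : L.Term α).realize v = (kC 0 : L.Term α).realize v := by
  induction n with
  | zero => rfl
  | succ n ih => rw [h, Snum, realize_Sf, realize_Sf, ih]

lemma realize_semitable_subst
    (h₀ : (kC 0 : L.Term α).realize v = (Sf (kC 0)).realize v)
    (hk : (kC 1 : L.Term α).realize v = (pairT (pairT (kC 0) (kC 0)) (kC 1)).realize v)
    {a : L.Term (Fin 3)} (ha : IsSemitable a) :
    (a.subst ![kC 0, kC 0, kC 1]).realize v = (kC 1 : L.Term α).realize v := by
  induction ha with
  | base => rfl
  | step p q a _ ih =>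
    rw [hk]
    simp [realize_Snum_zero h₀, ih]

end Semantics

/-- `zero`, `head` and `k` are the values of the numerals `Sⁿ(0)`, of the row heads
`Sᵖ(0) ⋅ Sᵠ(0)` and of the terms `a(0, 0, k)`; every other closed term is `junk`. -/
inductive TabModel : Type
  | zero | head | k | junk
  deriving DecidableEq

namespace TabModel

def succ : TabModel → TabModel
  | zero => zero
  | _ => junk

def pair : TabModel → TabModel → TabModel
  | zero, zero => head
  | head, k => k
  | _, _ => junk

def const : ℕ → TabModel
  | 0 => zero
  | 1 => k
  | _ => junk

def funMap : (l : ℕ) → ℕ → (Fin l → TabModel) → TabModel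
  | 0, n, _ => const n
  | 1, 0, v => succ (v 0)
  | 2, 0, v => pair (v 0) (v 1)
  | _, _, _ => junk

instance : L.Structure TabModel where
  funMap {l} f v := funMap l f v
  RelMap _ _ := False

instance : Nonempty TabModel := ⟨zero⟩

lemma const_eq_zero {n : ℕ} : const n = zero ↔ n = 0 := by
  rcases n with _ | _ | n <;> simp [const]

lemma const_ne_head (n : ℕ) : const n ≠ head := by
  rcases n with _ | _ | n <;> simp [const]

lemma const_eq_k {n : ℕ} : const n = k ↔ n = 1 := by
  rcases n with _ | _ | n <;> simp [const]

lemma succ_eq_zero {x : TabModel} : succ x = zero ↔ x = zero := by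
  cases x <;> decide

lemma succ_ne_head (x : TabModel) : succ x ≠ head := by
  cases x <;> decide

lemma succ_ne_k (x : TabModel) : succ x ≠ k := by
  cases x <;> decide

lemma pair_ne_zero (x y : TabModel) : pair x y ≠ zero := by
  cases x <;> cases y <;> decide

lemma pair_eq_head {x y : TabModel} : pair x y = head ↔ x = zero ∧ y = zero := by
  cases x <;> cases y <;> decide

lemma pair_eq_k {x y : TabModel} : pair x y = k ↔ x = head ∧ y = k := by
  cases x <;> cases y <;> decide

variable {v : Empty → TabModel}

lemma realize_of_not_isTabSymbol {l f : ℕ} (ts : Fin l → CTerm) (hf : ¬ IsTabSymbol l f) :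
    (Term.func f ts).realize v = junk := by
  simp only [IsTabSymbol, not_or, not_and] at hf
  rcases l with _ | _ | _ | l <;> rcases f with _ | f <;> simp_all <;> rfl

lemma eq_Snum_of_realize_eq_zero (b : CTerm) (hb : b.realize v = zero) :
    ∃ n, b = Snum n (kC 0) := by
  induction b using Term.induction_on_tabSymbols with
  | var x => exact x.elim
  | const n =>
    obtain rfl := const_eq_zero.mp hb
    exact ⟨0, rfl⟩
  | succ t ih =>
    obtain ⟨n, rfl⟩ := ih (succ_eq_zero.mp hb)
    exact ⟨n + 1, rfl⟩
  | pair t u => exact absurd hb (pair_ne_zero _ _)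
  | other f ts hf => simp [realize_of_not_isTabSymbol ts hf] at hb

lemma eq_pairT_Snum_of_realize_eq_head (b : CTerm) (hb : b.realize v = head) :
    ∃ p q, b = pairT (Snum p (kC 0)) (Snum q (kC 0)) := by
  induction b using Term.induction_on_tabSymbols with
  | var x => exact x.elim
  | const n => exact absurd hb (const_ne_head n)
  | succ t => exact absurd hb (succ_ne_head _)
  | pair t u =>
    obtain ⟨ht, hu⟩ := pair_eq_head.mp hb
    obtain ⟨p, rfl⟩ := eq_Snum_of_realize_eq_zero t ht
    obtain ⟨q, rfl⟩ := eq_Snum_of_realize_eq_zero u hu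
    exact ⟨p, q, rfl⟩
  | other f ts hf => simp [realize_of_not_isTabSymbol ts hf] at hb

lemma exists_semitable_of_realize_eq_k (b : CTerm) (hb : b.realize v = k) :
    ∃ a, IsSemitable a ∧ b = a.subst ![kC 0, kC 0, kC 1] := by
  induction b using Term.induction_on_tabSymbols with
  | var x => exact x.elim
  | const n =>
    obtain rfl := const_eq_k.mp hb
    exact ⟨Term.var 2, .base, rfl⟩
  | succ t => exact absurd hb (succ_ne_k _)
  | pair t u _ ih =>
    obtain ⟨ht, hu⟩ := pair_eq_k.mp hb
    obtain ⟨p, q, rfl⟩ := eq_pairT_Snum_of_realize_eq_head t ht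
    obtain ⟨a, ha, rfl⟩ := ih hu
    exact ⟨_, .step p q a ha, by simp [Term.subst]⟩
  | other f ts hf => simp [realize_of_not_isTabSymbol ts hf] at hb

end TabModel

theorem stmt_9 (b : CTerm) :
    Valid (TabF b) ↔ ∃ a : L.Term (Fin 3), IsSemitable a ∧
      b = a.subst ![kC 0, kC 0, kC 1] := by
  simp only [Valid, TabF, Sentence.Realize, Formula.realize_imp, Formula.realize_inf,
    Formula.realize_equal, and_imp]
  constructor
  · intro h
    exact TabModel.exists_semitable_of_realize_eq_k b (h TabModel rfl rfl).symm
  · rintro ⟨a, ha, rfl⟩ M _ _ h₀ hk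
    exact (realize_semitable_subst h₀ hk ha).symm
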